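/- arXiv:2301.05450 — 2 statements merged into one kernel-verified Lean document; each statement's English description precedes it below -/
import Mathlib

section
/- Let φ be a Schwartz function on ℝ with supp φ̂ ⊂ (−1,1), φ̂ ≥ 0 on (−1,1), and φ̂ ≥ 1 on (−1/2,1/2). For h ∈ (0,1/2) let φ_h(y) = h^{−1/2} φ(y/h). Then there exists ε₀ > 0 and c > 0 (depending only on φ) such that for all |τ| ≤ ε₀ h² and |y| ≤ ε₀ h, |e^{iτΔ_ℝ} φ_h(y)| ≥ c h^{−1/2}. -/
/-!
On the Fourier side `e^{iτΔ}φ_h(y) = ∫ √h ψ(hξ) e^{i(yξ - τξ²)} dξ` with `ψ = φ̂ ≥ 0` supported in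
`|hξ| < 1`. There the phase satisfies `|yξ - τξ²| ≤ 1` once `|y| ≤ h/2` and `|τ| ≤ h²/2`, so the
real part of the integrand is at least `cos 1` times its modulus: the integral cannot cancel, and
`|e^{iτΔ}φ_h(y)| ≥ cos 1 · ∫ √h ψ(hξ) dξ = cos 1 · h^{-1/2} ∫ ψ ≥ cos 1 · h^{-1/2}`.
-/

open Real MeasureTheory

lemma Real.cos_le_cos_of_abs_le {θ δ : ℝ} (hθ : |θ| ≤ δ) (hδ : δ ≤ π) : cos δ ≤ cos θ := by
  rw [← cos_abs θ]
  exact cos_le_cos_of_nonneg_of_le_pi (abs_nonneg θ) hδ hθ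

lemma Complex.re_ofReal_mul_exp_I_mul (a θ : ℝ) :
    ((a : ℂ) * Complex.exp (Complex.I * θ)).re = a * Real.cos θ := by
  rw [Complex.re_ofReal_mul, mul_comm Complex.I, Complex.exp_ofReal_mul_I_re]

theorem cos_mul_integral_le_norm_integral_mul_exp_I {A θ : ℝ → ℝ} {δ : ℝ}
    (hA : Integrable A) (hA_nonneg : ∀ ξ, 0 ≤ A ξ) (hθ : Measurable θ)
    (hphase : ∀ ξ, A ξ ≠ 0 → |θ ξ| ≤ δ) (hδ : δ ≤ π) :
    cos δ * ∫ ξ, A ξ ≤ ‖∫ ξ, (A ξ : ℂ) * Complex.exp (Complex.I * (θ ξ : ℂ))‖ := by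
  have hint : Integrable fun ξ ↦ (A ξ : ℂ) * Complex.exp (Complex.I * (θ ξ : ℂ)) := by
    refine hA.ofReal.mul_bdd (c := 1) (by fun_prop) (Filter.Eventually.of_forall fun ξ ↦ ?_)
    rw [mul_comm, Complex.norm_exp_ofReal_mul_I]
  have hpointwise : ∀ ξ, cos δ * A ξ ≤ ((A ξ : ℂ) * Complex.exp (Complex.I * (θ ξ : ℂ))).re := by
    intro ξ
    rw [Complex.re_ofReal_mul_exp_I_mul, mul_comm]
    by_cases hAξ : A ξ = 0
    · simp [hAξ]
    · exact mul_le_mul_of_nonneg_left (cos_le_cos_of_abs_le (hphase ξ hAξ) hδ) (hA_nonneg ξ)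
  calc cos δ * ∫ ξ, A ξ = ∫ ξ, cos δ * A ξ := (integral_const_mul _ _).symm
    _ ≤ ∫ ξ, ((A ξ : ℂ) * Complex.exp (Complex.I * (θ ξ : ℂ))).re :=
      integral_mono (hA.const_mul _) hint.re hpointwise
    _ = (∫ ξ, (A ξ : ℂ) * Complex.exp (Complex.I * (θ ξ : ℂ))).re := integral_re hint
    _ ≤ _ := Complex.re_le_norm _

lemma abs_mul_sub_mul_sq_le {h ε y τ ξ : ℝ} (hh : 0 < h) (hξ : |h * ξ| ≤ 1)
    (hy : |y| ≤ ε * h) (hτ : |τ| ≤ ε * h ^ 2) : |y * ξ - τ * ξ ^ 2| ≤ 2 * ε := by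
  have hε : 0 ≤ ε := nonneg_of_mul_nonneg_left ((abs_nonneg y).trans hy) hh
  rw [abs_mul, abs_of_pos hh] at hξ
  have hyξ : |y * ξ| ≤ ε := by
    rw [abs_mul]
    nlinarith [abs_nonneg y, abs_nonneg ξ]
  have hτξ : |τ * ξ ^ 2| ≤ ε := by
    rw [abs_mul, abs_pow]
    have : (h * |ξ|) ^ 2 ≤ 1 := pow_le_one₀ (by positivity) hξ
    nlinarith [abs_nonneg τ, sq_nonneg |ξ|]
  linarith [abs_sub (y * ξ) (τ * ξ ^ 2)]

lemma one_le_integral_of_one_le_on_Ioo {f : ℝ → ℝ} (hf : Integrable f) (hf_nonneg : ∀ x, 0 ≤ f x)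
    (hf_one : ∀ x, |x| < 1 / 2 → 1 ≤ f x) : 1 ≤ ∫ x, f x := by
  have hvol : volume.real (Set.Ioo (-(1 / 2) : ℝ) (1 / 2)) = 1 := by
    rw [Real.volume_real_Ioo]; norm_num
  calc (1 : ℝ) = 1 * volume.real (Set.Ioo (-(1 / 2) : ℝ) (1 / 2)) := by rw [hvol, one_mul]
    _ ≤ ∫ x in Set.Ioo (-(1 / 2)) (1 / 2), f x :=
      setIntegral_ge_of_const_le_real measurableSet_Ioo measure_Ioo_lt_top.ne
        (fun x hx ↦ hf_one x (abs_lt.2 hx)) hf.integrableOn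
    _ ≤ ∫ x, f x := setIntegral_le_integral hf (Filter.Eventually.of_forall hf_nonneg)

lemma integral_sqrt_mul_comp_mul_left (f : ℝ → ℝ) {h : ℝ} (hh : 0 < h) :
    ∫ ξ, √h * f (h * ξ) = (∫ ξ, f ξ) / √h := by
  rw [integral_const_mul, Measure.integral_comp_mul_left (fun x ↦ f x) h, smul_eq_mul,
    abs_of_pos (inv_pos.2 hh), ← mul_assoc, ← div_eq_mul_inv, sqrt_div_self, inv_mul_eq_div]

/-- Pointwise lower bound for the free Schrödinger evolution of the wave packet
`φ_h(y) = h^{−1/2} φ(y/h)`, where `φ` is the Schwartz function with Fourier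
transform `ψ = φ̂` (so `φ̂_h(ξ) = h^{1/2} ψ(hξ)` and
`e^{iτΔ_ℝ}φ_h(y) = ∫ h^{1/2} ψ(hξ) e^{i(yξ − τξ²)} dξ`): there are `ε₀, c > 0`
such that `|e^{iτΔ_ℝ}φ_h(y)| ≥ c h^{−1/2}` for `|τ| ≤ ε₀h²`, `|y| ≤ ε₀h`. -/
theorem stmt10 (ψ : SchwartzMap ℝ ℝ)
    (hsupp : ∀ ξ : ℝ, ψ ξ ≠ 0 → |ξ| < 1)
    (hnn : ∀ ξ : ℝ, 0 ≤ ψ ξ)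
    (hone : ∀ ξ : ℝ, |ξ| < 1 / 2 → 1 ≤ ψ ξ) :
    ∃ ε₀ : ℝ, 0 < ε₀ ∧ ∃ c : ℝ, 0 < c ∧
      ∀ h : ℝ, 0 < h → h < 1 / 2 → ∀ τ y : ℝ, |τ| ≤ ε₀ * h ^ 2 → |y| ≤ ε₀ * h →
        c / Real.sqrt h ≤
          ‖∫ ξ : ℝ, ((Real.sqrt h * ψ (h * ξ) : ℝ) : ℂ) *
              Complex.exp (Complex.I * ((y * ξ - τ * ξ ^ 2 : ℝ) : ℂ))‖ := by
  have hcos : 0 < cos 1 := cos_pos_of_mem_Ioo ⟨by linarith [pi_gt_three], by linarith [pi_gt_three]⟩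
  refine ⟨1 / 2, by norm_num, cos 1, hcos, fun h hh _ τ y hτ hy ↦ ?_⟩
  have hphase : ∀ ξ, √h * ψ (h * ξ) ≠ 0 → |y * ξ - τ * ξ ^ 2| ≤ 1 := fun ξ hξ ↦ by
    simpa using abs_mul_sub_mul_sq_le hh (hsupp _ (right_ne_zero_of_mul hξ)).le hy hτ
  calc cos 1 / √h ≤ cos 1 * ((∫ ξ, ψ ξ) / √h) := by
        rw [← mul_one_div]
        gcongr
        exact one_le_integral_of_one_le_on_Ioo ψ.integrable hnn hone
    _ = cos 1 * ∫ ξ, √h * ψ (h * ξ) := by rw [integral_sqrt_mul_comp_mul_left _ hh]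
    _ ≤ _ := cos_mul_integral_le_norm_integral_mul_exp_I
        ((ψ.integrable.comp_mul_left' hh.ne').const_mul _)
        (fun ξ ↦ mul_nonneg (sqrt_nonneg h) (hnn _)) (by fun_prop) hphase (by linarith [pi_gt_three])
end

section
/- Let g be a 2π-periodic function given by a trigonometric polynomial-type series g(x) = h^{1/2} ∑_{k∈ℤ} ψ(hk) e^{ikx}, where ψ is a nonnegative Schwartz function on ℝ with ψ ≥ 1 on (−1/2, 1/2) and supp ψ ⊂ (−1,1), and h ∈ (0,1/2). Then there exist ε₀, c > 0 such that, for the torus Schrödinger flow e^{iτΔ_𝕋} (multiplying the k-th coefficient by e^{−iτk²}), one has |e^{iτΔ_𝕋} g(x)| ≥ c h^{−1/2} for all |τ| ≤ ε₀ h² and |x| ≤ ε₀ h (x identified with a point of 𝕋 near 0). -/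
open Real

/-!
For `|x| ≤ h/4` and `|τ| ≤ h²/4` every phase `xk - τk²` with `ψ(hk) ≠ 0` (so `|hk| < 1`)
has modulus at most `1/2`, so all nonzero terms point into the half-plane where the real
part is at least half the modulus. The real part of the sum is then at least half the
total weight, and the `⌈1/(2h)⌉` frequencies `0 ≤ k < 1/(2h)` alone carry weight
`≥ √h / (2h)`.
-/

open Complex in
theorem mul_sum_le_norm_tsum_ofReal_mul_exp {ι : Type*} {a θ : ι → ℝ} (ha : Summable a)
    (ha_nonneg : ∀ i, 0 ≤ a i) {c : ℝ} (hc : 0 ≤ c) (hcos : ∀ i, a i ≠ 0 → c ≤ Real.cos (θ i))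
    (s : Finset ι) :
    c * ∑ i ∈ s, a i ≤ ‖∑' i, (a i : ℂ) * exp (I * (θ i : ℂ))‖ := by
  have hre : ∀ i, ((a i : ℂ) * exp (I * (θ i : ℂ))).re = a i * Real.cos (θ i) := fun i => by
    rw [mul_comm I, re_ofReal_mul, exp_ofReal_mul_I_re]
  have hsummable : Summable fun i => (a i : ℂ) * exp (I * (θ i : ℂ)) :=
    .of_norm <| by simpa [mul_comm I, abs_of_nonneg (ha_nonneg _)] using ha
  have hterm : ∀ i, c * a i ≤ a i * Real.cos (θ i) := fun i => by
    rcases eq_or_ne (a i) 0 with h0 | h0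
    · simp [h0]
    · nlinarith [hcos i h0, ha_nonneg i]
  calc c * ∑ i ∈ s, a i ≤ c * ∑' i, a i :=
        mul_le_mul_of_nonneg_left (ha.sum_le_tsum s fun i _ => ha_nonneg i) hc
    _ = ∑' i, c * a i := ha.tsum_mul_left c |>.symm
    _ ≤ ∑' i, a i * Real.cos (θ i) :=
        (ha.mul_left c).tsum_le_tsum hterm ((reCLM.summable hsummable).congr fun i => hre i)
    _ = (∑' i, (a i : ℂ) * exp (I * (θ i : ℂ))).re := by simp only [re_tsum hsummable, hre]
    _ ≤ _ := re_le_norm _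

theorem half_le_cos_of_abs_le_half {t : ℝ} (ht : |t| ≤ 1 / 2) : 1 / 2 ≤ Real.cos t := by
  have := abs_le.mp ht
  nlinarith [one_sub_sq_div_two_le_cos (x := t)]

theorem abs_sub_mul_sq_le {ε h x τ ξ : ℝ} (hh : 0 < h) (hx : |x| ≤ ε * h) (hτ : |τ| ≤ ε * h ^ 2)
    (hξ : |h * ξ| ≤ 1) : |x * ξ - τ * ξ ^ 2| ≤ 2 * ε := by
  have hε : 0 ≤ ε := nonneg_of_mul_nonneg_left ((abs_nonneg x).trans hx) hh
  have h1 : |x * ξ| ≤ ε := by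
    calc |x * ξ| = |x| * |ξ| := abs_mul _ _
      _ ≤ ε * h * |ξ| := by gcongr
      _ = ε * |h * ξ| := by rw [abs_mul, abs_of_pos hh]; ring
      _ ≤ ε := mul_le_of_le_one_right hε hξ
  have h2 : |τ * ξ ^ 2| ≤ ε := by
    calc |τ * ξ ^ 2| = |τ| * ξ ^ 2 := by rw [abs_mul, abs_of_nonneg (sq_nonneg ξ)]
      _ ≤ ε * h ^ 2 * ξ ^ 2 := by gcongr
      _ = ε * |h * ξ| ^ 2 := by rw [sq_abs]; ring
      _ ≤ ε := mul_le_of_le_one_right hε (pow_le_one₀ (abs_nonneg _) hξ)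
  linarith [abs_sub (x * ξ) (τ * ξ ^ 2)]

theorem summable_comp_mul_intCast_of_bounded_support {f : ℝ → ℝ} (hf : ∀ ξ, f ξ ≠ 0 → |ξ| < 1)
    {h : ℝ} (hh : 0 < h) : Summable fun k : ℤ => f (h * k) := by
  refine summable_of_hasFiniteSupport <| (Set.finite_Ioo ⌊-h⁻¹⌋ ⌈h⁻¹⌉).subset fun k hk => ?_
  have hk : |(k : ℝ)| < h⁻¹ := by
    have hk := hf _ hk
    rw [abs_mul, abs_of_pos hh] at hk
    rwa [← one_div, lt_div_iff₀ hh, mul_comm]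
  rw [abs_lt] at hk
  exact ⟨Int.floor_lt.mpr hk.1, Int.lt_ceil.mpr hk.2⟩

theorem one_div_two_mul_sqrt_le_sum_range {ψ : ℝ → ℝ} (hone : ∀ ξ, |ξ| < 1 / 2 → 1 ≤ ψ ξ) {h : ℝ}
    (hh : 0 < h) :
    1 / (2 * √h) ≤ ∑ k ∈ (Finset.range ⌈(2 * h)⁻¹⌉₊).map Nat.castEmbedding,
      √h * ψ (h * (k : ℤ)) := by
  have hterm : ∀ k ∈ Finset.range ⌈(2 * h)⁻¹⌉₊, √h ≤ √h * ψ (h * (k : ℤ)) := fun k hk => by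
    have hk : (k : ℝ) < (2 * h)⁻¹ := Nat.lt_ceil.mp (Finset.mem_range.mp hk)
    refine le_mul_of_one_le_right (sqrt_nonneg h) (hone _ ?_)
    rw [Int.cast_natCast, abs_of_nonneg (by positivity)]
    calc h * k < h * (2 * h)⁻¹ := by gcongr
      _ = 1 / 2 := by field_simp
  calc 1 / (2 * √h) = (2 * h)⁻¹ * √h := by
        field_simp; rw [sq_sqrt hh.le]
    _ ≤ ⌈(2 * h)⁻¹⌉₊ * √h := by gcongr; exact Nat.le_ceil _
    _ ≤ ∑ k ∈ Finset.range ⌈(2 * h)⁻¹⌉₊, √h * ψ (h * (k : ℤ)) := by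
        simpa using Finset.card_nsmul_le_sum _ _ _ hterm
    _ = _ := by rw [Finset.sum_map]; rfl

/-- Pointwise lower bound for the torus Schrödinger evolution of the periodic
wave packet `g(x) = h^{1/2} ∑_{k∈ℤ} ψ(hk) e^{ikx}` (so
`e^{iτΔ_𝕋}g(x) = ∑_k h^{1/2} ψ(hk) e^{i(xk − τk²)}`): there are `ε₀, c > 0`
such that `|e^{iτΔ_𝕋}g(x)| ≥ c h^{−1/2}` for `|τ| ≤ ε₀h²` and `|x| ≤ ε₀h`. -/
theorem stmt11 (ψ : SchwartzMap ℝ ℝ)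
    (hsupp : ∀ ξ : ℝ, ψ ξ ≠ 0 → |ξ| < 1)
    (hnn : ∀ ξ : ℝ, 0 ≤ ψ ξ)
    (hone : ∀ ξ : ℝ, |ξ| < 1 / 2 → 1 ≤ ψ ξ) :
    ∃ ε₀ : ℝ, 0 < ε₀ ∧ ∃ c : ℝ, 0 < c ∧
      ∀ h : ℝ, 0 < h → h < 1 / 2 → ∀ τ x : ℝ, |τ| ≤ ε₀ * h ^ 2 → |x| ≤ ε₀ * h →
        c / Real.sqrt h ≤
          ‖∑' k : ℤ, ((Real.sqrt h * ψ (h * k) : ℝ) : ℂ) *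
              Complex.exp (Complex.I * ((x * k - τ * k ^ 2 : ℝ) : ℂ))‖ := by
  refine ⟨1 / 4, by norm_num, 1 / 4, by norm_num, fun h hh _ τ x hτ hx => ?_⟩
  have hcos : ∀ k : ℤ, √h * ψ (h * k) ≠ 0 → 1 / 2 ≤ Real.cos (x * k - τ * k ^ 2) :=
    fun k hk => half_le_cos_of_abs_le_half <|
      (abs_sub_mul_sq_le hh hx hτ (hsupp _ (right_ne_zero_of_mul hk)).le).trans_eq (by norm_num)
  calc 1 / 4 / √h = 1 / 2 * (1 / (2 * √h)) := by ring
    _ ≤ 1 / 2 * ∑ k ∈ (Finset.range ⌈(2 * h)⁻¹⌉₊).map (Nat.castEmbedding : ℕ ↪ ℤ),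
        √h * ψ (h * k) := by
        gcongr; exact one_div_two_mul_sqrt_le_sum_range hone hh
    _ ≤ _ := mul_sum_le_norm_tsum_ofReal_mul_exp
        ((summable_comp_mul_intCast_of_bounded_support hsupp hh).mul_left _)
        (fun k => mul_nonneg (sqrt_nonneg h) (hnn _)) (by norm_num) hcos _
end
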